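/- arXiv:1806.01827 — 9 statements merged into one kernel-verified Lean document; each statement's English description precedes it below -/
import Mathlib

section
/- The set of confusion matrices 𝒞 = {(TP(h), TN(h)) : h a classifier} is a compact subset of ℝ². -/
/-!
Identify classifiers, up to `μ`-a.e. equality, with the set `K` of elements of `L²(μ)` taking
values in `[0, 1]` a.e. Testing against indicators, `g ∈ K` iff `0 ≤ ∫_s g ≤ μ s` for every
measurable `s`; through the Riesz isomorphism `L² ≃ (L²)*`, `K` therefore becomes a weak-* closed
subset of the unit ball, which is weak-* compact by Banach–Alaoglu. `TP` and `TN` are affine,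
weak-* continuous functions of the functional representing a classifier, so `𝒞` is a continuous
image of a compact set.
-/

open MeasureTheory Set InnerProductSpace

open scoped RealInnerProductSpace

namespace MeasureTheory

variable {X : Type*} [MeasurableSpace X] {μ : Measure X}

theorem L2.real_inner_eq_integral_mul (f g : Lp ℝ 2 μ) : ⟪f, g⟫ = ∫ x, f x * g x ∂μ := by
  simp [L2.inner_def, mul_comm]

theorem integral_mul_eq_toDual_apply {w : X → ℝ} (hw : MemLp w 2 μ) (g : Lp ℝ 2 μ) :
    ∫ x, w x * g x ∂μ = toDual ℝ (Lp ℝ 2 μ) g (hw.toLp w) := by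
  rw [toDual_apply_apply, L2.real_inner_eq_integral_mul]
  refine integral_congr_ae (hw.coeFn_toLp.mono fun x hx => ?_)
  dsimp only
  rw [hx, mul_comm]

def classifiersL2 (μ : Measure X) : Set (Lp ℝ 2 μ) := {g | ∀ᵐ x ∂μ, g x ∈ Icc 0 1}

theorem mem_classifiersL2 {g : Lp ℝ 2 μ} : g ∈ classifiersL2 μ ↔ ∀ᵐ x ∂μ, g x ∈ Icc 0 1 := Iff.rfl

theorem mem_classifiersL2_iff_setIntegral [IsFiniteMeasure μ] {g : Lp ℝ 2 μ} :
    g ∈ classifiersL2 μ ↔ ∀ s, MeasurableSet s → ∫ x in s, g x ∂μ ∈ Icc 0 (μ.real s) := by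
  have hg : Integrable g μ := (Lp.memLp g).integrable one_le_two
  constructor
  · intro hg01 s hs
    rw [mem_classifiersL2] at hg01
    refine ⟨setIntegral_nonneg_ae hs (hg01.mono fun x hx _ => hx.1), ?_⟩
    calc ∫ x in s, g x ∂μ ≤ ∫ _ in s, (1 : ℝ) ∂μ :=
          setIntegral_mono_ae_restrict hg.integrableOn (integrable_const 1).integrableOn
            (ae_restrict_of_ae (hg01.mono fun x hx => hx.2))
      _ = μ.real s := by simp
  · intro h
    have h0 : 0 ≤ᵐ[μ] g := ae_nonneg_of_forall_setIntegral_nonneg hg fun s hs _ => (h s hs).1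
    have h1 : g ≤ᵐ[μ] fun _ => (1 : ℝ) :=
      ae_le_of_forall_setIntegral_le hg (integrable_const 1) fun s hs _ => by simpa using (h s hs).2
    filter_upwards [h0, h1] with x hx0 hx1 using ⟨hx0, hx1⟩

theorem norm_le_one_of_mem_classifiersL2 [IsProbabilityMeasure μ] {g : Lp ℝ 2 μ}
    (hg : g ∈ classifiersL2 μ) : ‖g‖ ≤ 1 := by
  rw [mem_classifiersL2] at hg
  have := Lp.norm_le_of_ae_bound zero_le_one (hg.mono fun x hx => by
    rw [Real.norm_eq_abs, abs_le]; exact ⟨by linarith [hx.1], hx.2⟩)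
  simpa [measureUnivNNReal] using this

theorem exists_measurable_unitInterval_ae_eq {g : Lp ℝ 2 μ} (hg : g ∈ classifiersL2 μ) :
    ∃ h : X → ℝ, Measurable h ∧ (∀ x, h x ∈ Icc 0 1) ∧ h =ᵐ[μ] g := by
  have hgm := Lp.aestronglyMeasurable g
  refine ⟨fun x => max 0 (min 1 (hgm.mk g x)),
    measurable_const.max (measurable_const.min hgm.stronglyMeasurable_mk.measurable),
    fun x => ⟨le_max_left _ _, max_le zero_le_one (min_le_left _ _)⟩, ?_⟩
  filter_upwards [hgm.ae_eq_mk, hg] with x hx hx01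
  rw [← hx, min_eq_right hx01.2, max_eq_right hx01.1]

theorem isCompact_toDual_image_classifiersL2 [IsProbabilityMeasure μ] :
    IsCompact ((fun g => StrongDual.toWeakDual (toDual ℝ (Lp ℝ 2 μ) g)) '' classifiersL2 μ) := by
  set T := fun g => StrongDual.toWeakDual (toDual ℝ (Lp ℝ 2 μ) g)
  have hT (g : Lp ℝ 2 μ) {s : Set X} (hs : MeasurableSet s) :
      T g (indicatorConstLp 2 hs (measure_ne_top μ s) 1) = ∫ x in s, g x ∂μ := by
    rw [← L2.inner_indicatorConstLp_one hs (measure_ne_top μ s), real_inner_comm]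
    rfl
  have hTK : T '' classifiersL2 μ = {φ | ∀ s (hs : MeasurableSet s),
      φ (indicatorConstLp 2 hs (measure_ne_top μ s) 1) ∈ Icc 0 (μ.real s)} := by
    ext φ
    constructor
    · rintro ⟨g, hg, rfl⟩ s hs
      rw [hT]
      exact mem_classifiersL2_iff_setIntegral.1 hg s hs
    · intro hφ
      refine ⟨(toDual ℝ _).symm (WeakDual.toStrongDual φ), ?_, by simp [T]⟩
      refine mem_classifiersL2_iff_setIntegral.2 fun s hs => ?_
      rw [← hT]
      simpa [T] using hφ s hs
  have hclosed : IsClosed (T '' classifiersL2 μ) := by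
    rw [hTK]
    simp only [ofPred_forall]
    exact isClosed_iInter fun s => isClosed_iInter fun hs =>
      isClosed_Icc.preimage (WeakDual.eval_continuous _)
  refine (WeakDual.isCompact_closedBall 0 1).of_isClosed_subset hclosed ?_
  rintro _ ⟨g, hg, rfl⟩
  simpa [T] using norm_le_one_of_mem_classifiersL2 hg

def confusionSet (μ : Measure X) (η : X → ℝ) : Set (ℝ × ℝ) :=
  {p | ∃ h : X → ℝ, Measurable h ∧ (∀ x, h x ∈ Icc (0:ℝ) 1) ∧
    p = (∫ x, η x * h x ∂μ, ∫ x, (1 - η x) * (1 - h x) ∂μ)}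

theorem confusionSet_eq_image [IsFiniteMeasure μ] (η : X → ℝ) :
    confusionSet μ η = (fun g : Lp ℝ 2 μ => (∫ x, η x * g x ∂μ, ∫ x, (1 - η x) * (1 - g x) ∂μ)) ''
      classifiersL2 μ := by
  ext p
  constructor
  · rintro ⟨h, hm, h01, rfl⟩
    have hh := (memLp_of_bounded (μ := μ) (ae_of_all _ h01) hm.aestronglyMeasurable 2).coeFn_toLp
    refine ⟨_, hh.mono fun x hx => hx ▸ h01 x, ?_⟩
    simp only [Prod.ext_iff]
    constructor <;> refine integral_congr_ae (hh.mono fun x hx => ?_) <;> simp only [hx]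
  · rintro ⟨g, hg, rfl⟩
    obtain ⟨h, hm, h01, hh⟩ := exists_measurable_unitInterval_ae_eq hg
    refine ⟨h, hm, h01, ?_⟩
    simp only [Prod.ext_iff]
    constructor <;> refine integral_congr_ae (hh.mono fun x hx => ?_) <;> simp only [hx]

end MeasureTheory

/-- The set of confusion matrices `𝒞` is a compact subset of `ℝ²`. -/
theorem confusion_set_compact
    {X : Type*} [MeasurableSpace X] (μ : Measure X) [IsProbabilityMeasure μ]
    (η : X → ℝ) (hη : Measurable η) (hη01 : ∀ x, η x ∈ Icc (0:ℝ) 1) :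
    IsCompact {p : ℝ × ℝ | ∃ h : X → ℝ, Measurable h ∧ (∀ x, h x ∈ Icc (0:ℝ) 1) ∧
        p = (∫ x, η x * h x ∂μ, ∫ x, (1 - η x) * (1 - h x) ∂μ)} := by
  have hηL := memLp_of_bounded (μ := μ) (ae_of_all _ hη01) hη.aestronglyMeasurable 2
  have hξL : MemLp (fun x => 1 - η x) 2 μ := memLp_of_bounded (a := 0) (b := 1)
    (ae_of_all _ fun x => ⟨by linarith [(hη01 x).2], by linarith [(hη01 x).1]⟩)
    (hη.const_sub 1).aestronglyMeasurable 2
  set F : WeakDual ℝ (Lp ℝ 2 μ) → ℝ × ℝ :=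
    fun φ => (φ (hηL.toLp η), ∫ x, (1 - η x) ∂μ - φ (hξL.toLp _))
  have hF : Continuous F := (WeakDual.eval_continuous _).prodMk
    (continuous_const.sub (WeakDual.eval_continuous _))
  have hfactor : (fun g : Lp ℝ 2 μ => (∫ x, η x * g x ∂μ, ∫ x, (1 - η x) * (1 - g x) ∂μ)) =
      F ∘ fun g => StrongDual.toWeakDual (toDual ℝ (Lp ℝ 2 μ) g) := by
    ext g
    · exact integral_mul_eq_toDual_apply hηL g
    · have hint : Integrable (fun x => (1 - η x) * g x) μ := hξL.integrable_mul (Lp.memLp g)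
      change _ = ∫ x, (1 - η x) ∂μ - toDual ℝ (Lp ℝ 2 μ) g (hξL.toLp _)
      rw [← integral_mul_eq_toDual_apply hξL g, ← integral_sub (hξL.integrable one_le_two) hint]
      simp only [mul_one_sub]
  change IsCompact (confusionSet μ η)
  rw [confusionSet_eq_image, hfactor, image_comp]
  exact isCompact_toDual_image_classifiersL2.image hF
end

section
/- For every c ∈ [0,1] there exist t ∈ [0,1] and λ ∈ [0,1] such that the randomized threshold classifier h* := λ·𝟙[η ≥ t] + (1−λ)·𝟙[η > t] satisfies ∫ h* dμ = c, and TP(h) ≤ TP(h*) for every classifier h : X → [0,1] with ∫ h dμ = c. That is, the maximum of TP over classifiers with prediction rate c is attained by a randomized threshold classifier on η. -/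
open MeasureTheory Set

/-!
Neyman–Pearson argument. Choose `t` as the smallest level with `μ {t < η} ≤ c`; continuity
of measure from above and below gives `μ {t < η} ≤ c ≤ μ {t ≤ η}`, and `λ` interpolates
between the two. The randomized threshold classifier `h*` equals `1` where `η > t` and `0`
where `η < t`, so `(η - t) (h* - h) ≥ 0` pointwise for every classifier `h`. Integrating, and
using `∫ h = ∫ h* = c`, gives `∫ η h ≤ ∫ η h*`.
-/

theorem exists_mem_Icc_mul_add_one_sub_mul_eq {a b c : ℝ} (hbc : b ≤ c) (hca : c ≤ a) :
    ∃ l ∈ Icc (0:ℝ) 1, l * a + (1 - l) * b = c := by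
  have hc : c ∈ segment ℝ b a := by rw [segment_eq_Icc (hbc.trans hca)]; exact ⟨hbc, hca⟩
  rw [segment_eq_image] at hc
  obtain ⟨l, hl, hlc⟩ := hc
  exact ⟨l, hl, by simpa only [smul_eq_mul, add_comm] using hlc⟩

section Measure

variable {X : Type*} [MeasurableSpace X] {μ : Measure X} {f : X → ℝ}

theorem measure_lt_le_of_forall_gt {t : ℝ} {c : ENNReal}
    (h : ∀ s, t < s → μ {x | s < f x} ≤ c) : μ {x | t < f x} ≤ c := by
  obtain ⟨u, hu_anti, hu_gt, hu_lim⟩ := exists_seq_strictAnti_tendsto t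
  have hU : {x | t < f x} = ⋃ n, {x | u n < f x} := by
    ext x
    simp only [mem_ofPred_eq, mem_iUnion]
    exact ⟨fun hx => (hu_lim.eventually (gt_mem_nhds hx)).exists,
      fun ⟨n, hn⟩ => (hu_gt n).trans hn⟩
  have hmono : Monotone fun n => {x | u n < f x} :=
    fun m n hmn x hx => (hu_anti.antitone hmn).trans_lt hx
  rw [hU, hmono.measure_iUnion]
  exact iSup_le fun n => h _ (hu_gt n)

theorem le_measure_le_of_forall_lt [IsFiniteMeasure μ] (hf : Measurable f) {t : ℝ}
    {c : ENNReal} (h : ∀ s < t, c ≤ μ {x | s < f x}) : c ≤ μ {x | t ≤ f x} := by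
  obtain ⟨u, hu_mono, hu_lt, hu_lim⟩ := exists_seq_strictMono_tendsto t
  have hI : {x | t ≤ f x} = ⋂ n, {x | u n < f x} := by
    ext x
    simp only [mem_ofPred_eq, mem_iInter]
    exact ⟨fun hx n => (hu_lt n).trans_le hx,
      fun hx => le_of_tendsto' hu_lim fun n => (hx n).le⟩
  have hanti : Antitone fun n => {x | u n < f x} :=
    fun m n hmn x hx => (hu_mono.monotone hmn).trans_lt hx
  have hmeas n : NullMeasurableSet {x | u n < f x} μ :=
    (measurableSet_lt measurable_const hf).nullMeasurableSet
  rw [hI, hanti.measure_iInter hmeas ⟨0, measure_ne_top _ _⟩]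
  exact le_iInf fun n => h _ (hu_lt n)

theorem exists_measure_lt_le_le_measure_le [IsFiniteMeasure μ] (hf : Measurable f) {a b : ℝ}
    (hab : a ≤ b) (hf_mem : ∀ x, f x ∈ Icc a b) {c : ENNReal} (hc : c ≤ μ univ) :
    ∃ t ∈ Icc a b, μ {x | t < f x} ≤ c ∧ c ≤ μ {x | t ≤ f x} := by
  set S := {s | a ≤ s ∧ μ {x | s < f x} ≤ c}
  have hbS : b ∈ S := ⟨hab, by simp [fun x => not_lt.2 (hf_mem x).2]⟩
  have hS_bdd : BddBelow S := ⟨a, fun s hs => hs.1⟩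
  refine ⟨sInf S, ⟨le_csInf ⟨b, hbS⟩ fun s hs => hs.1, csInf_le hS_bdd hbS⟩, ?_, ?_⟩
  · refine measure_lt_le_of_forall_gt fun s hs => ?_
    obtain ⟨s', hs'S, hs's⟩ := exists_lt_of_csInf_lt ⟨b, hbS⟩ hs
    exact (measure_mono fun x (hx : s < f x) => hs's.trans hx).trans hs'S.2
  · refine le_measure_le_of_forall_lt hf fun s hs => ?_
    by_cases has : a ≤ s
    · have hsS : s ∉ S := fun hsS => (csInf_le hS_bdd hsS).not_gt hs
      exact (not_le.1 fun hle => hsS ⟨has, hle⟩).le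
    · have huniv : {x | s < f x} = univ :=
        eq_univ_of_forall fun x => (not_le.1 has).trans_le (hf_mem x).1
      rwa [huniv]

theorem integrable_of_mem_Icc [IsFiniteMeasure μ] (hf : Measurable f) {a b : ℝ}
    (hf_mem : ∀ x, f x ∈ Icc a b) : Integrable f μ :=
  .of_bound hf.aestronglyMeasurable (max |a| |b|)
    (ae_of_all _ fun x => abs_le_max_abs_abs (hf_mem x).1 (hf_mem x).2)

theorem integral_mul_le_integral_mul_of_sub_mul_sub_nonneg {η h H : X → ℝ} {t : ℝ}
    (hh : Integrable h μ) (hH : Integrable H μ)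
    (hηh : Integrable (fun x => η x * h x) μ) (hηH : Integrable (fun x => η x * H x) μ)
    (hmass : ∫ x, h x ∂μ = ∫ x, H x ∂μ) (hpt : ∀ x, 0 ≤ (η x - t) * (H x - h x)) :
    ∫ x, η x * h x ∂μ ≤ ∫ x, η x * H x ∂μ := by
  have hsplit : ∫ x, (η x - t) * (H x - h x) ∂μ =
      (∫ x, η x * H x ∂μ - ∫ x, η x * h x ∂μ) - t * (∫ x, H x ∂μ - ∫ x, h x ∂μ) := by
    have hexpand : ∀ x, (η x - t) * (H x - h x) = (η x * H x - η x * h x) - t * (H x - h x) :=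
      fun x => by ring
    have hdiff : Integrable (fun x => η x * H x - η x * h x) μ := hηH.sub hηh
    have hmass_diff : Integrable (fun x => t * (H x - h x)) μ := (hH.sub hh).const_mul t
    simp_rw [hexpand]
    rw [integral_sub hdiff hmass_diff, integral_sub hηH hηh, integral_const_mul,
      integral_sub hH hh]
  have hnonneg : 0 ≤ ∫ x, (η x - t) * (H x - h x) ∂μ := integral_nonneg hpt
  rwa [hsplit, hmass, sub_self, mul_zero, sub_zero, sub_nonneg] at hnonneg

end Measure

section RandomizedThreshold

variable {X : Type*} {η : X → ℝ} {t l : ℝ}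

noncomputable def randomizedThreshold (η : X → ℝ) (t l : ℝ) (x : X) : ℝ :=
  l * {x | t ≤ η x}.indicator 1 x + (1 - l) * {x | t < η x}.indicator 1 x

theorem randomizedThreshold_of_lt {x : X} (hx : t < η x) :
    randomizedThreshold η t l x = 1 := by
  simp [randomizedThreshold, hx, hx.le]

theorem randomizedThreshold_of_gt {x : X} (hx : η x < t) :
    randomizedThreshold η t l x = 0 := by
  simp [randomizedThreshold, not_le.2 hx, not_lt.2 hx.le]

theorem randomizedThreshold_mem_Icc (hl : l ∈ Icc (0:ℝ) 1) (x : X) :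
    randomizedThreshold η t l x ∈ Icc (0:ℝ) 1 := by
  obtain ⟨hl0, hl1⟩ := hl
  unfold randomizedThreshold
  constructor <;> by_cases h₁ : t ≤ η x <;> by_cases h₂ : t < η x <;> simp [h₁, h₂] <;>
    linarith

theorem measurable_randomizedThreshold [MeasurableSpace X] (hη : Measurable η) :
    Measurable (randomizedThreshold η t l) :=
  ((measurable_const.indicator (measurableSet_le measurable_const hη)).const_mul l).add
    ((measurable_const.indicator (measurableSet_lt measurable_const hη)).const_mul (1 - l))

theorem integral_randomizedThreshold [MeasurableSpace X] {μ : Measure X} [IsFiniteMeasure μ]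
    (hη : Measurable η) :
    ∫ x, randomizedThreshold η t l x ∂μ =
      l * μ.real {x | t ≤ η x} + (1 - l) * μ.real {x | t < η x} := by
  have hle : MeasurableSet {x | t ≤ η x} := measurableSet_le measurable_const hη
  have hlt : MeasurableSet {x | t < η x} := measurableSet_lt measurable_const hη
  have hint_le : Integrable ({x | t ≤ η x}.indicator (1 : X → ℝ)) μ :=
    (integrable_const 1).indicator hle
  have hint_lt : Integrable ({x | t < η x}.indicator (1 : X → ℝ)) μ :=
    (integrable_const 1).indicator hlt
  unfold randomizedThreshold
  rw [integral_add (hint_le.const_mul l) (hint_lt.const_mul (1 - l)), integral_const_mul,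
    integral_const_mul, integral_indicator_one hle, integral_indicator_one hlt]

theorem sub_mul_sub_randomizedThreshold_nonneg {h : X → ℝ} {x : X}
    (hx : h x ∈ Icc (0:ℝ) 1) :
    0 ≤ (η x - t) * (randomizedThreshold η t l x - h x) := by
  rcases lt_trichotomy (η x) t with hgt | heq | hlt
  · rw [randomizedThreshold_of_gt hgt]
    exact mul_nonneg_of_nonpos_of_nonpos (by linarith) (by linarith [hx.1])
  · simp [heq]
  · rw [randomizedThreshold_of_lt hlt]
    exact mul_nonneg (by linarith) (by linarith [hx.2])

end RandomizedThreshold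

/-- For every `c ∈ [0,1]` there exist `t, λ ∈ [0,1]` such that the
randomized threshold classifier `h* = λ·𝟙[η ≥ t] + (1−λ)·𝟙[η > t]` has prediction
rate `c` and maximizes `TP` among all classifiers with prediction rate `c`. -/
theorem tp_max_at_randomized_threshold
    {X : Type*} [MeasurableSpace X] (μ : Measure X) [IsProbabilityMeasure μ]
    (η : X → ℝ) (hη : Measurable η) (hη01 : ∀ x, η x ∈ Icc (0:ℝ) 1)
    (c : ℝ) (hc : c ∈ Icc (0:ℝ) 1) :
    ∃ t ∈ Icc (0:ℝ) 1, ∃ l ∈ Icc (0:ℝ) 1,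
      (∫ x, (l * ({x | t ≤ η x}.indicator (fun _ => (1:ℝ)) x) +
          (1 - l) * ({x | t < η x}.indicator (fun _ => (1:ℝ)) x)) ∂μ) = c ∧
      ∀ h : X → ℝ, Measurable h → (∀ x, h x ∈ Icc (0:ℝ) 1) → (∫ x, h x ∂μ) = c →
        (∫ x, η x * h x ∂μ) ≤
          ∫ x, η x * (l * ({x | t ≤ η x}.indicator (fun _ => (1:ℝ)) x) +
            (1 - l) * ({x | t < η x}.indicator (fun _ => (1:ℝ)) x)) ∂μ := by
  obtain ⟨t, ht, hlt, hle⟩ := exists_measure_lt_le_le_measure_le (μ := μ) hη zero_le_one hη01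
    (c := ENNReal.ofReal c) (by simpa using hc.2)
  obtain ⟨l, hl, hlc⟩ := exists_mem_Icc_mul_add_one_sub_mul_eq
    (ENNReal.toReal_le_of_le_ofReal hc.1 hlt)
    ((ENNReal.ofReal_le_iff_le_toReal (measure_ne_top _ _)).1 hle)
  have hmass : ∫ x, randomizedThreshold η t l x ∂μ = c := by
    rw [integral_randomizedThreshold hη, measureReal_def, measureReal_def, hlc]
  have hint : ∀ f : X → ℝ, Measurable f → (∀ x, f x ∈ Icc (0:ℝ) 1) →
      Integrable f μ ∧ Integrable (fun x => η x * f x) μ := fun f hf hf01 =>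
    ⟨integrable_of_mem_Icc hf hf01, integrable_of_mem_Icc (hη.mul hf) fun x =>
      ⟨mul_nonneg (hη01 x).1 (hf01 x).1, mul_le_one₀ (hη01 x).2 (hf01 x).1 (hf01 x).2⟩⟩
  have hH := hint (randomizedThreshold η t l) (measurable_randomizedThreshold hη)
    (randomizedThreshold_mem_Icc hl)
  refine ⟨t, ht, l, hl, hmass, fun h hh hh01 hhc => ?_⟩
  exact integral_mul_le_integral_mul_of_sub_mul_sub_nonneg (hint h hh hh01).1 hH.1
    (hint h hh hh01).2 hH.2 (hhc.trans hmass.symm)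
    fun x => sub_mul_sub_randomizedThreshold_nonneg (hh01 x)
end

section
/- Suppose g(t) := μ{x : η(x) ≥ t} is continuous and strictly decreasing on [0,1] (Assumption 1), and let m₁₁ > 0 and m₀₀ > 0. Then the maximizer of the linear performance metric m₁₁·TP + m₀₀·TN over the set of confusion matrices is unique: if h₁ and h₂ are classifiers such that m₁₁·TP(hᵢ) + m₀₀·TN(hᵢ) ≥ m₁₁·TP(h) + m₀₀·TN(h) for every classifier h (i = 1, 2), then TP(h₁) = TP(h₂) and TN(h₁) = TN(h₂). Equivalently, every supporting hyperplane of 𝒞 with strictly negative slope is tangent to 𝒞 at exactly one point. -/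
open MeasureTheory Set Filter

/-- Bounded measurable functions are integrable w.r.t. a finite measure. -/
lemma integrable_of_bound' {X : Type*} [MeasurableSpace X] (μ : Measure X)
    [IsFiniteMeasure μ] {f : X → ℝ} (hf : Measurable f) (C : ℝ)
    (hb : ∀ x, |f x| ≤ C) : Integrable f μ :=
  (integrable_const C).mono' hf.aestronglyMeasurable (ae_of_all _ hb)

/-- Under Assumption 1 (`g` continuous and strictly decreasing on
`[0,1]`) and for strictly positive weights `m₁₁, m₀₀`, the maximizer of the linear
metric `m₁₁·TP + m₀₀·TN` over the set of confusion matrices is unique: any two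
maximizing classifiers have the same confusion matrix. -/
theorem linear_metric_maximizer_unique
    {X : Type*} [MeasurableSpace X] (μ : Measure X) [IsProbabilityMeasure μ]
    (η : X → ℝ) (hη : Measurable η) (hη01 : ∀ x, η x ∈ Icc (0:ℝ) 1)
    (hg_cont : ContinuousOn (fun t : ℝ => μ {x | t ≤ η x}) (Icc (0:ℝ) 1))
    (hg_anti : StrictAntiOn (fun t : ℝ => μ {x | t ≤ η x}) (Icc (0:ℝ) 1))
    (m₁₁ m₀₀ : ℝ) (hm₁₁ : 0 < m₁₁) (hm₀₀ : 0 < m₀₀)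
    (h₁ h₂ : X → ℝ) (hh₁ : Measurable h₁) (hh₁01 : ∀ x, h₁ x ∈ Icc (0:ℝ) 1)
    (hh₂ : Measurable h₂) (hh₂01 : ∀ x, h₂ x ∈ Icc (0:ℝ) 1)
    (hmax₁ : ∀ h : X → ℝ, Measurable h → (∀ x, h x ∈ Icc (0:ℝ) 1) →
      m₁₁ * (∫ x, η x * h x ∂μ) + m₀₀ * (∫ x, (1 - η x) * (1 - h x) ∂μ) ≤
        m₁₁ * (∫ x, η x * h₁ x ∂μ) + m₀₀ * (∫ x, (1 - η x) * (1 - h₁ x) ∂μ))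
    (hmax₂ : ∀ h : X → ℝ, Measurable h → (∀ x, h x ∈ Icc (0:ℝ) 1) →
      m₁₁ * (∫ x, η x * h x ∂μ) + m₀₀ * (∫ x, (1 - η x) * (1 - h x) ∂μ) ≤
        m₁₁ * (∫ x, η x * h₂ x ∂μ) + m₀₀ * (∫ x, (1 - η x) * (1 - h₂ x) ∂μ)) :
    (∫ x, η x * h₁ x ∂μ) = (∫ x, η x * h₂ x ∂μ) ∧
    (∫ x, (1 - η x) * (1 - h₁ x) ∂μ) = (∫ x, (1 - η x) * (1 - h₂ x) ∂μ) := by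
  have hc : (0:ℝ) < m₁₁ + m₀₀ := by linarith
  set φ : X → ℝ := fun x => (m₁₁ + m₀₀) * η x - m₀₀ with hφdef
  have hφm : Measurable φ := ((measurable_const.mul hη).sub measurable_const)
  have hφb : ∀ x, |φ x| ≤ m₁₁ + m₀₀ + m₀₀ := by
    intro x
    have h0 := (hη01 x).1; have h1 := (hη01 x).2
    rw [abs_le]; constructor <;> simp only [hφdef] <;> nlinarith
  -- the threshold classifier
  set hs : X → ℝ := fun x => if 0 < φ x then 1 else 0 with hsdef
  have hhs : Measurable hs := by
    exact Measurable.ite (measurableSet_lt measurable_const hφm)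
      measurable_const measurable_const
  have hhs01 : ∀ x, hs x ∈ Icc (0:ℝ) 1 := by
    intro x; simp only [hsdef]; split_ifs <;> norm_num
  -- integrability facts for any classifier
  have habs : ∀ {h : X → ℝ}, (∀ x, h x ∈ Icc (0:ℝ) 1) → ∀ x, |h x| ≤ 1 := by
    intro h hh x; rw [abs_le]; exact ⟨by linarith [(hh x).1], (hh x).2⟩
  have int_ηh : ∀ {h : X → ℝ}, Measurable h → (∀ x, h x ∈ Icc (0:ℝ) 1) →
      Integrable (fun x => η x * h x) μ := by
    intro h hm hb
    refine integrable_of_bound' μ (hη.mul hm) 1 fun x => ?_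
    rw [abs_mul]
    simpa using mul_le_mul (habs hη01 x) (habs hb x) (abs_nonneg _) zero_le_one
  have int_1ηh : ∀ {h : X → ℝ}, Measurable h → (∀ x, h x ∈ Icc (0:ℝ) 1) →
      Integrable (fun x => (1 - η x) * h x) μ := by
    intro h hm hb
    refine integrable_of_bound' μ ((measurable_const.sub hη).mul hm) 1 fun x => ?_
    rw [abs_mul]
    have : |1 - η x| ≤ 1 := by
      rw [abs_le]; constructor <;> [linarith [(hη01 x).2]; linarith [(hη01 x).1]]
    simpa using mul_le_mul this (habs hb x) (abs_nonneg _) zero_le_one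
  have int_1η : Integrable (fun x => (1 - η x)) μ := by
    refine integrable_of_bound' μ (measurable_const.sub hη) 1 fun x => ?_
    rw [abs_le]; constructor <;> [linarith [(hη01 x).2]; linarith [(hη01 x).1]]
  have int_φh : ∀ {h : X → ℝ}, Measurable h → (∀ x, h x ∈ Icc (0:ℝ) 1) →
      Integrable (fun x => φ x * h x) μ := by
    intro h hm hb
    refine integrable_of_bound' μ (hφm.mul hm) (m₁₁ + m₀₀ + m₀₀) fun x => ?_
    rw [abs_mul]
    simpa using mul_le_mul (hφb x) (habs hb x) (abs_nonneg _) (by positivity)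
  -- decomposition of the objective
  have obj_eq : ∀ (h : X → ℝ), Measurable h → (∀ x, h x ∈ Icc (0:ℝ) 1) →
      m₁₁ * (∫ x, η x * h x ∂μ) + m₀₀ * (∫ x, (1 - η x) * (1 - h x) ∂μ) =
        (∫ x, φ x * h x ∂μ) + m₀₀ * ∫ x, (1 - η x) ∂μ := by
    intro h hm hb
    have e1 : (∫ x, (1 - η x) * (1 - h x) ∂μ) =
        (∫ x, (1 - η x) ∂μ) - ∫ x, (1 - η x) * h x ∂μ := by
      rw [← integral_sub int_1η (int_1ηh hm hb)]
      congr 1 with x; ring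
    have e2 : (∫ x, φ x * h x ∂μ) =
        m₁₁ * (∫ x, η x * h x ∂μ) - m₀₀ * ∫ x, (1 - η x) * h x ∂μ := by
      rw [← integral_const_mul, ← integral_const_mul,
        ← integral_sub ((int_ηh hm hb).const_mul m₁₁) ((int_1ηh hm hb).const_mul m₀₀)]
      congr 1 with x; simp only [hφdef]; ring
    rw [e1, e2]; ring
  -- any maximizer h has φ·h = φ·hs a.e.
  have key : ∀ (h : X → ℝ), Measurable h → (∀ x, h x ∈ Icc (0:ℝ) 1) →
      (∀ h' : X → ℝ, Measurable h' → (∀ x, h' x ∈ Icc (0:ℝ) 1) →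
        m₁₁ * (∫ x, η x * h' x ∂μ) + m₀₀ * (∫ x, (1 - η x) * (1 - h' x) ∂μ) ≤
          m₁₁ * (∫ x, η x * h x ∂μ) + m₀₀ * (∫ x, (1 - η x) * (1 - h x) ∂μ)) →
      (fun x => φ x * h x) =ᵐ[μ] (fun x => φ x * hs x) := by
    intro h hm hb hmax
    have hle : (∫ x, φ x * hs x ∂μ) ≤ ∫ x, φ x * h x ∂μ := by
      have := hmax hs hhs hhs01
      rw [obj_eq h hm hb, obj_eq hs hhs hhs01] at this
      linarith
    have hptw : ∀ x, φ x * h x ≤ φ x * hs x := by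
      intro x
      simp only [hsdef]
      split_ifs with hx
      · have := (hb x).2; nlinarith
      · push_neg at hx
        have := (hb x).1; nlinarith
    have hge : (∫ x, φ x * h x ∂μ) ≤ ∫ x, φ x * hs x ∂μ :=
      integral_mono (int_φh hm hb) (int_φh hhs hhs01) hptw
    have heq : (∫ x, (φ x * hs x - φ x * h x) ∂μ) = 0 := by
      rw [integral_sub (int_φh hhs hhs01) (int_φh hm hb)]
      linarith
    have hzero : (fun x => φ x * hs x - φ x * h x) =ᵐ[μ] 0 := by
      refine (integral_eq_zero_iff_of_nonneg (fun x => ?_)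
        ((int_φh hhs hhs01).sub (int_φh hm hb))).mp heq
      simpa using hptw x
    filter_upwards [hzero] with x hx
    simp only [Pi.zero_apply] at hx
    linarith
  -- the set where φ vanishes is null
  set t : ℝ := m₀₀ / (m₁₁ + m₀₀) with htdef
  have ht0 : 0 < t := div_pos hm₀₀ hc
  have ht1 : t < 1 := by rw [htdef, div_lt_one hc]; linarith
  have htmem : t ∈ Icc (0:ℝ) 1 := ⟨le_of_lt ht0, le_of_lt ht1⟩
  have hnull : μ {x | η x = t} = 0 := by
    set u : ℕ → ℝ := fun n => t + (1 - t) / (n + 1) with hudef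
    have h1t : (0:ℝ) < 1 - t := by linarith
    have hu_mem : ∀ n, u n ∈ Icc (0:ℝ) 1 := by
      intro n
      have hpos : (0:ℝ) < (n:ℝ) + 1 := by positivity
      constructor
      · have : 0 ≤ (1 - t) / ((n:ℝ) + 1) := le_of_lt (div_pos h1t hpos)
        simp only [hudef]; linarith
      · have : (1 - t) / ((n:ℝ) + 1) ≤ (1 - t) := by
          rw [div_le_iff₀ hpos]; nlinarith
        simp only [hudef]; linarith
    have hu_gt : ∀ n, t < u n := by
      intro n
      have hpos : (0:ℝ) < (n:ℝ) + 1 := by positivity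
      have : (0:ℝ) < (1 - t) / ((n:ℝ) + 1) := div_pos h1t hpos
      simp only [hudef]; linarith
    have hu_tendsto : Tendsto u atTop (nhds t) := by
      have h0 : Tendsto (fun n : ℕ => (1 - t) / ((n:ℝ) + 1)) atTop (nhds 0) := by
        simpa [div_eq_mul_inv] using
          (tendsto_one_div_add_atTop_nhds_zero_nat.const_mul (1 - t))
      simpa using (tendsto_const_nhds.add h0)
    have hg_tendsto : Tendsto (fun n => μ {x | u n ≤ η x}) atTop
        (nhds (μ {x | t ≤ η x})) := by
      have hcw : ContinuousWithinAt (fun s : ℝ => μ {x | s ≤ η x}) (Icc 0 1) t :=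
        hg_cont t htmem
      refine hcw.tendsto.comp ?_
      rw [tendsto_nhdsWithin_iff]
      exact ⟨hu_tendsto, Eventually.of_forall hu_mem⟩
    have hmono : Monotone (fun n => {x | u n ≤ η x}) := by
      intro m n hmn x hx
      have hanti : u n ≤ u m := by
        have : ((m:ℝ) + 1) ≤ ((n:ℝ) + 1) := by exact_mod_cast by omega
        have hm1 : (0:ℝ) < (m:ℝ) + 1 := by positivity
        have : (1 - t) / ((n:ℝ) + 1) ≤ (1 - t) / ((m:ℝ) + 1) := by
          apply div_le_div_of_nonneg_left (by linarith) hm1 this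
        simp only [hudef]; linarith
      exact le_trans hanti hx
    have hUnion : {x | t < η x} = ⋃ n, {x | u n ≤ η x} := by
      ext x
      simp only [mem_setOf_eq, mem_iUnion]
      constructor
      · intro hx
        obtain ⟨n, hn⟩ := (hu_tendsto.eventually_le_const hx).exists
        exact ⟨n, hn⟩
      · rintro ⟨n, hn⟩; exact lt_of_lt_of_le (hu_gt n) hn
    have hmeas_lt : μ {x | t < η x} = μ {x | t ≤ η x} := by
      rw [hUnion]
      have := tendsto_measure_iUnion_atTop (μ := μ) hmono
      exact tendsto_nhds_unique this hg_tendsto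
    have hsplit : {x | t ≤ η x} = {x | t < η x} ∪ {x | η x = t} := by
      ext x; simp only [mem_setOf_eq, mem_union]
      constructor
      · intro hx; rcases lt_or_eq_of_le hx with h | h
        · exact Or.inl h
        · exact Or.inr h.symm
      · rintro (h | h); · exact le_of_lt h
        · exact le_of_eq h.symm
    have hdisj : Disjoint {x | t < η x} {x | η x = t} := by
      rw [disjoint_left]
      intro x hx hx'
      simp only [mem_setOf_eq] at hx hx'
      rw [hx'] at hx; exact lt_irrefl t hx
    have hmeas_set : MeasurableSet {x | η x = t} := hη (measurableSet_singleton t)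
    have : μ {x | t ≤ η x} = μ {x | t < η x} + μ {x | η x = t} := by
      rw [hsplit, measure_union hdisj hmeas_set]
    rw [hmeas_lt] at this
    have hfin : μ {x | t ≤ η x} ≠ ⊤ := measure_ne_top μ _
    have h0 : μ {x | t ≤ η x} + 0 = μ {x | t ≤ η x} + μ {x | η x = t} := by
      rw [add_zero]; exact this
    exact ((ENNReal.add_right_inj hfin).mp h0).symm
  have hφnull : μ {x | φ x = 0} = 0 := by
    have : {x | φ x = 0} = {x | η x = t} := by
      ext x
      simp only [mem_setOf_eq, hφdef, htdef]
      rw [sub_eq_zero]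
      constructor
      · intro h; field_simp; linarith
      · intro h; rw [h]; field_simp
    rwa [this]
  have hφne : ∀ᵐ x ∂μ, φ x ≠ 0 := by
    rw [ae_iff]; simpa using hφnull
  -- combine
  have k1 := key h₁ hh₁ hh₁01 hmax₁
  have k2 := key h₂ hh₂ hh₂01 hmax₂
  have h12 : h₁ =ᵐ[μ] h₂ := by
    filter_upwards [k1, k2, hφne] with x e1 e2 hne
    exact mul_left_cancel₀ hne (e1.trans e2.symm)
  have hTP : (∫ x, η x * h₁ x ∂μ) = (∫ x, η x * h₂ x ∂μ) := by
    refine integral_congr_ae ?_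
    filter_upwards [h12] with x hx
    rw [hx]
  refine ⟨hTP, ?_⟩
  have e1 := hmax₁ h₂ hh₂ hh₂01
  have e2 := hmax₂ h₁ hh₁ hh₁01
  rw [hTP] at e1 e2
  have : m₀₀ * (∫ x, (1 - η x) * (1 - h₁ x) ∂μ) =
      m₀₀ * (∫ x, (1 - η x) * (1 - h₂ x) ∂μ) := by linarith
  exact mul_left_cancel₀ (ne_of_gt hm₀₀) this
end

section
/- Let S ⊆ ℝ² be a convex set. Call a point p ∈ S Pareto-maximal in S if no point of S dominates it, i.e. for every z ∈ S, if p₁ ≤ z₁ and p₂ ≤ z₂ then z = p. Let φ : ℝ² → ℝ be quasiconcave on S (for all a, b ∈ S and λ ∈ [0,1], φ(λa + (1−λ)b) ≥ min(φ(a), φ(b))) and monotone increasing (z₁ ≤ w₁ and z₂ ≤ w₂ implies φ(z) ≤ φ(w)). Let ρ : [0,1] → S be a map such that ρ(u) is Pareto-maximal in S for every u and the first coordinate u ↦ ρ(u)₁ is monotone nondecreasing. Then the composition φ ∘ ρ is quasiconcave (hence unimodal) on [0,1]: for all 0 ≤ r < s < t ≤ 1, φ(ρ(s)) ≥ min(φ(ρ(r)),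 φ(ρ(t))). -/
open Set

/-- A quasiconcave, monotone-increasing function composed with a
parametrization of the Pareto-maximal (upper) boundary of a convex set `S ⊆ ℝ²`
(with nondecreasing first coordinate) is quasiconcave — hence unimodal — on `[0,1]`. -/
theorem quasiconcave_on_upper_boundary
    (S : Set (ℝ × ℝ)) (hS : Convex ℝ S)
    (φ : ℝ × ℝ → ℝ)
    (hφ_qc : ∀ a ∈ S, ∀ b ∈ S, ∀ l : ℝ, l ∈ Icc (0:ℝ) 1 →
      min (φ a) (φ b) ≤ φ (l • a + (1 - l) • b))
    (hφ_mono : ∀ z w : ℝ × ℝ, z.1 ≤ w.1 → z.2 ≤ w.2 → φ z ≤ φ w)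
    (ρ : ℝ → ℝ × ℝ)
    (hρS : ∀ u ∈ Icc (0:ℝ) 1, ρ u ∈ S)
    (hρ_pareto : ∀ u ∈ Icc (0:ℝ) 1, ∀ z ∈ S,
      (ρ u).1 ≤ z.1 → (ρ u).2 ≤ z.2 → z = ρ u)
    (hρ_mono : MonotoneOn (fun u => (ρ u).1) (Icc (0:ℝ) 1)) :
    ∀ r s t : ℝ, 0 ≤ r → r < s → s < t → t ≤ 1 →
      min (φ (ρ r)) (φ (ρ t)) ≤ φ (ρ s) := by
  intro r s t hr hrs hst ht
  have hrI : r ∈ Icc (0:ℝ) 1 := ⟨hr, by linarith⟩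
  have hsI : s ∈ Icc (0:ℝ) 1 := ⟨by linarith, by linarith⟩
  have htI : t ∈ Icc (0:ℝ) 1 := ⟨by linarith, ht⟩
  set a := ρ r with ha_def
  set b := ρ t with hb_def
  have haS : a ∈ S := hρS r hrI
  have hbS : b ∈ S := hρS t htI
  have h1 : a.1 ≤ (ρ s).1 := hρ_mono hrI hsI hrs.le
  have h2 : (ρ s).1 ≤ b.1 := hρ_mono hsI htI hst.le
  obtain ⟨l, hl, heq⟩ : ∃ l : ℝ, l ∈ Icc (0:ℝ) 1 ∧
      l * a.1 + (1 - l) * b.1 = (ρ s).1 := by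
    by_cases hab : a.1 = b.1
    · exact ⟨1, ⟨zero_le_one, le_refl 1⟩, by nlinarith⟩
    · have hlt : a.1 < b.1 := lt_of_le_of_ne (h1.trans h2) hab
      have hd : 0 < b.1 - a.1 := by linarith
      refine ⟨(b.1 - (ρ s).1) / (b.1 - a.1), ⟨div_nonneg (by linarith) hd.le, ?_⟩, ?_⟩
      · rw [div_le_one hd]; linarith
      · have : (b.1 - (ρ s).1) / (b.1 - a.1) * (b.1 - a.1) = b.1 - (ρ s).1 :=
          div_mul_cancel₀ _ hd.ne'
        nlinarith
  set c := l • a + (1 - l) • b with hc_def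
  have hcS : c ∈ S := hS haS hbS hl.1 (by linarith [hl.2]) (by ring)
  have hc1 : c.1 = (ρ s).1 := by
    simp only [hc_def, Prod.fst_add, Prod.smul_fst, smul_eq_mul]
    exact heq
  have hmin : min (φ a) (φ b) ≤ φ c := hφ_qc a haS b hbS l hl
  by_cases h : (ρ s).2 ≤ c.2
  · have hce : c = ρ s := hρ_pareto s hsI c hcS hc1.ge h
    rw [hce] at hmin; exact hmin
  · have hc2 : c.2 ≤ (ρ s).2 := le_of_not_ge h
    exact hmin.trans (hφ_mono c (ρ s) hc1.le hc2)
end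

section
/- Let S ⊆ ℝ² be a convex set. Call a point p ∈ S Pareto-minimal in S if no point of S is dominated by it, i.e. for every z ∈ S, if z₁ ≤ p₁ and z₂ ≤ p₂ then z = p. Let ψ : ℝ² → ℝ be quasiconvex on S (for all a, b ∈ S and λ ∈ [0,1], ψ(λa + (1−λ)b) ≤ max(ψ(a), ψ(b))) and monotone increasing (z₁ ≤ w₁ and z₂ ≤ w₂ implies ψ(z) ≤ ψ(w)). Let ρ : [0,1] → S be a map such that ρ(u) is Pareto-minimal in S for every u and the first coordinate u ↦ ρ(u)₁ is monotone nondecreasing. Then the composition ψ ∘ ρ is quasiconvex (hence unimodal) on [0,1]: for all 0 ≤ r < s < t ≤ 1, ψ(ρ(s)) ≤ max(ψ(ρ(r)), ψ(ρ(t))). -/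
open Set

/-- A quasiconvex, monotone-increasing function composed with a
parametrization of the Pareto-minimal (lower) boundary of a convex set `S ⊆ ℝ²`
(with nondecreasing first coordinate) is quasiconvex — hence unimodal — on `[0,1]`. -/
theorem quasiconvex_on_lower_boundary
    (S : Set (ℝ × ℝ)) (hS : Convex ℝ S)
    (ψ : ℝ × ℝ → ℝ)
    (hψ_qc : ∀ a ∈ S, ∀ b ∈ S, ∀ l : ℝ, l ∈ Icc (0:ℝ) 1 →
      ψ (l • a + (1 - l) • b) ≤ max (ψ a) (ψ b))
    (hψ_mono : ∀ z w : ℝ × ℝ, z.1 ≤ w.1 → z.2 ≤ w.2 → ψ z ≤ ψ w)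
    (ρ : ℝ → ℝ × ℝ)
    (hρS : ∀ u ∈ Icc (0:ℝ) 1, ρ u ∈ S)
    (hρ_pareto : ∀ u ∈ Icc (0:ℝ) 1, ∀ z ∈ S,
      z.1 ≤ (ρ u).1 → z.2 ≤ (ρ u).2 → z = ρ u)
    (hρ_mono : MonotoneOn (fun u => (ρ u).1) (Icc (0:ℝ) 1)) :
    ∀ r s t : ℝ, 0 ≤ r → r < s → s < t → t ≤ 1 →
      ψ (ρ s) ≤ max (ψ (ρ r)) (ψ (ρ t)) := by
  intro r s t hr hrs hst ht
  have hrI : r ∈ Icc (0:ℝ) 1 := ⟨hr, le_of_lt (lt_of_lt_of_le (hrs.trans hst) ht)⟩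
  have hsI : s ∈ Icc (0:ℝ) 1 := ⟨hr.trans hrs.le, (hst.le.trans ht)⟩
  have htI : t ∈ Icc (0:ℝ) 1 := ⟨hr.trans (hrs.trans hst).le, ht⟩
  set a := ρ r with ha
  set b := ρ t with hb
  set c := ρ s with hc
  have haS : a ∈ S := hρS r hrI
  have hbS : b ∈ S := hρS t htI
  have hcS : c ∈ S := hρS s hsI
  have h1 : a.1 ≤ c.1 := hρ_mono hrI hsI hrs.le
  have h2 : c.1 ≤ b.1 := hρ_mono hsI htI hst.le
  rcases le_or_gt b.1 a.1 with hba | hab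
  · -- all first coordinates equal
    have e1 : a.1 = c.1 := le_antisymm h1 (h2.trans hba)
    rcases le_total c.2 a.2 with h | h
    · have : c = a := hρ_pareto r hrI c hcS e1.ge h
      rw [this]; exact le_max_left _ _
    · have : a = c := hρ_pareto s hsI a haS e1.le h
      rw [← this]; exact le_max_left _ _
  · -- interpolate
    set l : ℝ := (b.1 - c.1) / (b.1 - a.1) with hl
    have hd : 0 < b.1 - a.1 := by linarith
    have hl0 : 0 ≤ l := div_nonneg (by linarith) hd.le
    have hl1 : l ≤ 1 := by
      rw [div_le_one hd]; linarith
    set p : ℝ × ℝ := l • a + (1 - l) • b with hp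
    have hpS : p ∈ S := hS haS hbS hl0 (by linarith) (by ring)
    have hp1 : p.1 = c.1 := by
      have : p.1 = l * a.1 + (1 - l) * b.1 := rfl
      rw [this, hl]
      field_simp
      ring
    have hp2 : c.2 ≤ p.2 := by
      rcases le_total c.2 p.2 with h | h
      · exact h
      · have : p = c := hρ_pareto s hsI p hpS hp1.le h
        rw [this]
    calc ψ c ≤ ψ p := hψ_mono c p hp1.ge hp2
      _ ≤ max (ψ a) (ψ b) := hψ_qc a haS b hbS l ⟨hl0, hl1⟩
end

section
/- Let ζ ∈ [0,1] and let p₁₁, p₀₀, q₁₁, q₀₀, q₀ ∈ ℝ satisfy: p₁₁ ≥ 0, p₀₀ ≥ 0, p₁₁ ≥ q₁₁, p₀₀ ≥ q₀₀, and q₀ = (p₁₁ − q₁₁)ζ + (p₀₀ − q₀₀)(1 − ζ). Define the linear-fractional performance metric φ(u, v) := (p₁₁·u + p₀₀·v) / (q₁₁·u + q₀₀·v + q₀) on the rectangle [0,ζ] × [0,1−ζ]. Then for every (u, v) ∈ [0,ζ] × [0,1−ζ] at which the denominator q₁₁·u + q₀₀·v + q₀ is strictly positive, one has 0 ≤ φ(u,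 v) ≤ 1; and φ is monotone increasing: for all (u, v), (u′, v′) ∈ [0,ζ] × [0,1−ζ] with u ≤ u′, v ≤ v′ and strictly positive denominators at both points, φ(u, v) ≤ φ(u′, v′). -/
open Set

/-- Under the sufficient conditions of Assumption 3, the
linear-fractional performance metric `φ(u,v) = (p₁₁u + p₀₀v)/(q₁₁u + q₀₀v + q₀)`
is bounded in `[0,1]` and monotone increasing on `[0,ζ] × [0,1−ζ]` wherever its
denominator is strictly positive. -/
theorem lfpm_bounded_and_monotone
    (ζ p₁₁ p₀₀ q₁₁ q₀₀ q₀ : ℝ) (hζ : ζ ∈ Icc (0:ℝ) 1)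
    (hp₁₁ : 0 ≤ p₁₁) (hp₀₀ : 0 ≤ p₀₀)
    (hpq₁₁ : q₁₁ ≤ p₁₁) (hpq₀₀ : q₀₀ ≤ p₀₀)
    (hq₀ : q₀ = (p₁₁ - q₁₁) * ζ + (p₀₀ - q₀₀) * (1 - ζ)) :
    (∀ u v : ℝ, u ∈ Icc (0:ℝ) ζ → v ∈ Icc (0:ℝ) (1 - ζ) →
      0 < q₁₁ * u + q₀₀ * v + q₀ →
      0 ≤ (p₁₁ * u + p₀₀ * v) / (q₁₁ * u + q₀₀ * v + q₀) ∧
      (p₁₁ * u + p₀₀ * v) / (q₁₁ * u + q₀₀ * v + q₀) ≤ 1) ∧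
    (∀ u v u' v' : ℝ, u ∈ Icc (0:ℝ) ζ → v ∈ Icc (0:ℝ) (1 - ζ) →
      u' ∈ Icc (0:ℝ) ζ → v' ∈ Icc (0:ℝ) (1 - ζ) → u ≤ u' → v ≤ v' →
      0 < q₁₁ * u + q₀₀ * v + q₀ → 0 < q₁₁ * u' + q₀₀ * v' + q₀ →
      (p₁₁ * u + p₀₀ * v) / (q₁₁ * u + q₀₀ * v + q₀) ≤
        (p₁₁ * u' + p₀₀ * v') / (q₁₁ * u' + q₀₀ * v' + q₀)) := by

  obtain ⟨hζ0, hζ1⟩ := hζ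
  have key : ∀ u v : ℝ, u ∈ Icc (0:ℝ) ζ → v ∈ Icc (0:ℝ) (1 - ζ) →
      p₁₁ * u + p₀₀ * v ≤ q₁₁ * u + q₀₀ * v + q₀ := by
    intro u v ⟨hu0, hu1⟩ ⟨hv0, hv1⟩
    nlinarith [mul_nonneg (sub_nonneg.2 hpq₁₁) (sub_nonneg.2 hu1),
      mul_nonneg (sub_nonneg.2 hpq₀₀) (sub_nonneg.2 hv1)]
  have nn : ∀ u v : ℝ, u ∈ Icc (0:ℝ) ζ → v ∈ Icc (0:ℝ) (1 - ζ) →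
      0 ≤ p₁₁ * u + p₀₀ * v := by
    intro u v ⟨hu0, _⟩ ⟨hv0, _⟩
    exact add_nonneg (mul_nonneg hp₁₁ hu0) (mul_nonneg hp₀₀ hv0)
  constructor
  · intro u v hu hv hD
    exact ⟨div_nonneg (nn u v hu hv) hD.le, (div_le_one hD).2 (key u v hu hv)⟩
  · intro u v u' v' hu hv hu' hv' huu hvv hD hD'
    rw [div_le_div_iff₀ hD hD']
    have hN := nn u v hu hv
    have hDN := key u v hu hv
    have ha : 0 ≤ u' - u := sub_nonneg.2 huu
    have hb : 0 ≤ v' - v := sub_nonneg.2 hvv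
    rcases le_or_gt (q₁₁ * (u' - u) + q₀₀ * (v' - v)) 0 with h | h
    · nlinarith [mul_nonneg (add_nonneg (mul_nonneg hp₁₁ ha) (mul_nonneg hp₀₀ hb)) hD.le,
        mul_nonpos_of_nonneg_of_nonpos hN h]
    · nlinarith [mul_le_mul_of_nonneg_left hDN h.le,
        mul_nonneg (add_nonneg (mul_nonneg (sub_nonneg.2 hpq₁₁) ha)
          (mul_nonneg (sub_nonneg.2 hpq₀₀) hb)) hD.le]
end

section
/- Let ζ, p₁₁, p₀₀, q₁₁, q₀₀, q₀, m₁₁, m₀₀, C₀, τ ∈ ℝ satisfy the system: p₁₁ − τ·q₁₁ = m₁₁, p₀₀ − τ·q₀₀ = m₀₀, τ·q₀ = C₀, q₀ = (p₁₁ − q₁₁)ζ + (p₀₀ − q₀₀)(1 − ζ), and p₁₁ + p₀₀ = 1. Define P := p₁₁·ζ + p₀₀·(1 − ζ) and Q := P + C₀ − m₁₁·ζ − m₀₀·(1 − ζ). If q₀ ≠ 0 and Q ≠ 0, then the remaining coefficients are determined by p₁₁ via: p₀₀ = 1 − p₁₁, q₀ = C₀·P/Q, q₁₁ = (p₁₁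 − m₁₁)·P/Q, and q₀₀ = (p₀₀ − m₀₀)·P/Q. -/
/-- In the LFPM elicitation system of equations, the hyperplane data
`(m₁₁, m₀₀, C₀)` together with `p₁₁` determine all remaining coefficients:
`p₀₀ = 1 − p₁₁`, `q₀ = C₀·P/Q`, `q₁₁ = (p₁₁ − m₁₁)·P/Q`, `q₀₀ = (p₀₀ − m₀₀)·P/Q`,
where `P = p₁₁ζ + p₀₀(1−ζ)` and `Q = P + C₀ − m₁₁ζ − m₀₀(1−ζ)`. -/
theorem lfpm_system_solution
    (ζ p₁₁ p₀₀ q₁₁ q₀₀ q₀ m₁₁ m₀₀ C₀ τ : ℝ)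
    (h1 : p₁₁ - τ * q₁₁ = m₁₁)
    (h2 : p₀₀ - τ * q₀₀ = m₀₀)
    (h3 : τ * q₀ = C₀)
    (h4 : q₀ = (p₁₁ - q₁₁) * ζ + (p₀₀ - q₀₀) * (1 - ζ))
    (h5 : p₁₁ + p₀₀ = 1)
    (P Q : ℝ)
    (hP : P = p₁₁ * ζ + p₀₀ * (1 - ζ))
    (hQ : Q = P + C₀ - m₁₁ * ζ - m₀₀ * (1 - ζ))
    (hq₀ : q₀ ≠ 0) (hQ0 : Q ≠ 0) :
    p₀₀ = 1 - p₁₁ ∧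
    q₀ = C₀ * P / Q ∧
    q₁₁ = (p₁₁ - m₁₁) * P / Q ∧
    q₀₀ = (p₀₀ - m₀₀) * P / Q := by
  have key : Q = τ * P := by
    rw [hQ, hP]; rw [← h1, ← h2, ← h3, h4]; ring
  have hτ : τ ≠ 0 := by
    intro h; apply hQ0; rw [key, h]; ring
  have hPne : P ≠ 0 := by
    intro h; apply hQ0; rw [key, h]; ring
  refine ⟨by linarith, ?_, ?_, ?_⟩
  · rw [← h3, key]; field_simp
  · rw [← h1, key]; field_simp; ring
  · rw [← h2, key]; field_simp; ring
end

section
/- Let m₁₁, m₀₀ ≥ 0 with m₁₁² + m₀₀² = 1, and set δ̄ := m₀₀/(m₁₁ + m₀₀). For δ ∈ [0,1] define Φ(δ) := m₁₁·∫_{x : η(x) ≥ δ} η dμ + m₀₀·∫_{x : η(x) < δ} (1 − η) dμ (the value of the linear metric at the threshold classifier 𝟙[η ≥ δ]). Suppose there exist constants k₁ ≥ k₀ > 0 and ν₀ > 0 such that for every ν ∈ (0, ν₀]: k₀·ν ≤ μ{x : 0 ≤ δ̄ − η(x) ≤ ν} ≤ k₁·ν. Then for every δ′ ∈ [0, δ̄]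 with δ̄ − δ′ ≤ ν₀, one has Φ(δ̄) − Φ(δ′) ≥ (k₀²/(4k₁))·(δ̄ − δ′)². In particular, if |Φ(δ̄) − Φ(δ′)| < ε_Ω then |δ̄ − δ′| < (2/k₀)·√(k₁·ε_Ω). -/
/-!
Moving the threshold from `δ'` up to `δ̄` only reclassifies the points with `δ' ≤ η < δ̄`, and since
`m₀₀ = (m₁₁ + m₀₀) δ̄` each of them changes the metric by `(m₁₁ + m₀₀)(δ̄ - η) ≥ δ̄ - η`. So the gap
`Φ(δ̄) - Φ(δ')` dominates `∫ (δ̄ - η)` over `{0 < δ̄ - η ≤ Δ}`, `Δ = δ̄ - δ'`. On the part where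
`δ̄ - η > t` the integrand exceeds `t`, and by the two-sided density condition that part has mass at
least `k₀ Δ - k₁ t`; the choice `t = k₀ Δ / (2 k₁)` yields `k₀² Δ² / (4 k₁)`.
-/

open MeasureTheory Set

noncomputable def linearMetricValue {X : Type*} [MeasurableSpace X] (μ : Measure X) (η : X → ℝ)
    (m₁₁ m₀₀ δ : ℝ) : ℝ :=
  m₁₁ * (∫ x in {x | δ ≤ η x}, η x ∂μ) + m₀₀ * (∫ x in {x | η x < δ}, (1 - η x) ∂μ)

section

variable {X : Type*} [MeasurableSpace X] {μ : Measure X} [IsFiniteMeasure μ] {η : X → ℝ}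

theorem linearMetricValue_sub_of_le (hη : Measurable η) (hηi : Integrable η μ) (m₁₁ m₀₀ : ℝ)
    {a b : ℝ} (hab : a ≤ b) :
    linearMetricValue μ η m₁₁ m₀₀ b - linearMetricValue μ η m₁₁ m₀₀ a =
      ∫ x in {x | a ≤ η x ∧ η x < b}, (m₀₀ - (m₁₁ + m₀₀) * η x) ∂μ := by
  have hge : {x | a ≤ η x} \ {x | b ≤ η x} = {x | a ≤ η x ∧ η x < b} := by
    ext x; simp
  have hlt : {x | η x < b} \ {x | η x < a} = {x | a ≤ η x ∧ η x < b} := by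
    ext x; simp [and_comm]
  have hηi' : Integrable (fun x => 1 - η x) μ := (integrable_const 1).sub hηi
  have hge_int := setIntegral_sdiff (s := {x | a ≤ η x}) (measurableSet_le measurable_const hη)
    hηi.integrableOn fun x (hx : b ≤ η x) => hab.trans hx
  have hlt_int := setIntegral_sdiff (s := {x | η x < b}) (measurableSet_lt hη measurable_const)
    hηi'.integrableOn fun x (hx : η x < a) => hx.trans_le hab
  rw [hge] at hge_int
  rw [hlt] at hlt_int
  calc linearMetricValue μ η m₁₁ m₀₀ b - linearMetricValue μ η m₁₁ m₀₀ a
      = m₀₀ * ∫ x in {x | a ≤ η x ∧ η x < b}, (1 - η x) ∂μ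
          - m₁₁ * ∫ x in {x | a ≤ η x ∧ η x < b}, η x ∂μ := by
        rw [hge_int, hlt_int, linearMetricValue, linearMetricValue]; ring
    _ = ∫ x in {x | a ≤ η x ∧ η x < b}, (m₀₀ * (1 - η x) - m₁₁ * η x) ∂μ := by
        rw [integral_sub (hηi'.integrableOn.const_mul _) (hηi.integrableOn.const_mul _),
          integral_const_mul, integral_const_mul]
    _ = ∫ x in {x | a ≤ η x ∧ η x < b}, (m₀₀ - (m₁₁ + m₀₀) * η x) ∂μ := by
        congr 1; ext x; ring

theorem linearMetricValue_sub_eq_mul_setIntegral (hη : Measurable η) (hηi : Integrable η μ)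
    {m₁₁ m₀₀ δbar δ' : ℝ} (hδbar : m₀₀ = (m₁₁ + m₀₀) * δbar) (hδ' : δ' ≤ δbar) :
    linearMetricValue μ η m₁₁ m₀₀ δbar - linearMetricValue μ η m₁₁ m₀₀ δ' =
      (m₁₁ + m₀₀) *
        ∫ x in {x | 0 < δbar - η x ∧ δbar - η x ≤ δbar - δ'}, (δbar - η x) ∂μ := by
  have hset : {x | δ' ≤ η x ∧ η x < δbar} = {x | 0 < δbar - η x ∧ δbar - η x ≤ δbar - δ'} := by
    ext x; simp only [mem_ofPred_eq, sub_pos, sub_le_sub_iff_left, and_comm]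
  rw [linearMetricValue_sub_of_le hη hηi m₁₁ m₀₀ hδ', ← integral_const_mul, hset]
  congr 1; ext x
  linear_combination hδbar

end

section

variable {X : Type*} [MeasurableSpace X] {μ : Measure X} [IsFiniteMeasure μ] {f : X → ℝ}

theorem mul_measureReal_sub_le_setIntegral (hf : Measurable f) (hfi : Integrable f μ)
    {t Δ : ℝ} (ht : 0 ≤ t) :
    t * (μ.real {x | 0 ≤ f x ∧ f x ≤ Δ} - μ.real {x | 0 ≤ f x ∧ f x ≤ t}) ≤
      ∫ x in {x | 0 < f x ∧ f x ≤ Δ}, f x ∂μ := by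
  have hmeas : ∀ c, MeasurableSet {x | 0 ≤ f x ∧ f x ≤ c} := fun c =>
    (measurableSet_le measurable_const hf).inter (measurableSet_le hf measurable_const)
  set D := {x | 0 ≤ f x ∧ f x ≤ Δ} \ {x | 0 ≤ f x ∧ f x ≤ t}
  have hD : ∀ x ∈ D, t < f x := fun x ⟨⟨h0, _⟩, hxt⟩ => not_le.mp fun h => hxt ⟨h0, h⟩
  have hDsub : D ⊆ {x | 0 < f x ∧ f x ≤ Δ} := fun x hx => ⟨ht.trans_lt (hD x hx), hx.1.2⟩
  calc t * (μ.real {x | 0 ≤ f x ∧ f x ≤ Δ} - μ.real {x | 0 ≤ f x ∧ f x ≤ t})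
      ≤ t * μ.real D := mul_le_mul_of_nonneg_left le_measureReal_sdiff ht
    _ ≤ ∫ x in D, f x ∂μ := setIntegral_ge_of_const_le_real ((hmeas Δ).diff (hmeas t))
        (measure_ne_top μ _) (fun x hx => (hD x hx).le) hfi.integrableOn
    _ ≤ ∫ x in {x | 0 < f x ∧ f x ≤ Δ}, f x ∂μ := by
        refine setIntegral_mono_set hfi.integrableOn ?_ hDsub.eventuallyLE
        filter_upwards [ae_restrict_mem ((measurableSet_lt measurable_const hf).inter
          (measurableSet_le hf measurable_const))] with x hx using hx.1.le

theorem sq_mul_le_setIntegral_of_density (hf : Measurable f) (hfi : Integrable f μ)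
    {k₀ k₁ Δ : ℝ} (hk₀ : 0 < k₀) (hk : k₀ ≤ 2 * k₁) (hΔ : 0 < Δ)
    (hlow : k₀ * Δ ≤ μ.real {x | 0 ≤ f x ∧ f x ≤ Δ})
    (hup : ∀ t, 0 < t → t ≤ Δ → μ.real {x | 0 ≤ f x ∧ f x ≤ t} ≤ k₁ * t) :
    k₀ ^ 2 / (4 * k₁) * Δ ^ 2 ≤ ∫ x in {x | 0 < f x ∧ f x ≤ Δ}, f x ∂μ := by
  have hk₁ : 0 < k₁ := by linarith
  set t := k₀ * Δ / (2 * k₁) with ht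
  have ht0 : 0 < t := by positivity
  have hk₁t : k₁ * t = k₀ * Δ / 2 := by rw [ht]; field_simp
  have htΔ : t ≤ Δ := by
    rw [ht, div_le_iff₀ (by positivity)]; nlinarith
  calc k₀ ^ 2 / (4 * k₁) * Δ ^ 2 = t * (k₀ * Δ - k₁ * t) := by rw [hk₁t, ht]; field_simp; ring
    _ ≤ t * (μ.real {x | 0 ≤ f x ∧ f x ≤ Δ} - μ.real {x | 0 ≤ f x ∧ f x ≤ t}) := by
        gcongr
        exact hup t ht0 htΔ
    _ ≤ _ := mul_measureReal_sub_le_setIntegral hf hfi ht0.le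

end

theorem lt_two_div_mul_sqrt_of_sq_mul_lt {k₀ k₁ Δ ε : ℝ} (hk₀ : 0 < k₀) (hk₁ : 0 < k₁)
    (hΔ : 0 ≤ Δ) (h : k₀ ^ 2 / (4 * k₁) * Δ ^ 2 < ε) :
    Δ < 2 / k₀ * Real.sqrt (k₁ * ε) := by
  have hsq : (k₀ * Δ / 2) ^ 2 < k₁ * ε := by
    rw [div_mul_eq_mul_div, div_lt_iff₀ (by positivity)] at h
    nlinarith
  have hroot : k₀ * Δ / 2 < Real.sqrt (k₁ * ε) := (Real.lt_sqrt (by positivity)).mpr hsq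
  calc Δ = 2 / k₀ * (k₀ * Δ / 2) := by field_simp
    _ < 2 / k₀ * Real.sqrt (k₁ * ε) := by gcongr

theorem linear_metric_quadratic_growth_near_threshold_general
    {X : Type*} [MeasurableSpace X] (μ : Measure X) [IsProbabilityMeasure μ]
    (η : X → ℝ) (hη : Measurable η) (hη01 : ∀ x, η x ∈ Icc (0:ℝ) 1)
    (m₁₁ m₀₀ : ℝ) (hm₁₁ : 0 ≤ m₁₁) (hm₀₀ : 0 ≤ m₀₀) (hnorm : m₁₁ ^ 2 + m₀₀ ^ 2 = 1)
    (δbar : ℝ) (hδbar : δbar = m₀₀ / (m₁₁ + m₀₀))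
    (Φ : ℝ → ℝ)
    (hΦ : ∀ δ : ℝ, Φ δ = m₁₁ * (∫ x in {x | δ ≤ η x}, η x ∂μ) +
      m₀₀ * (∫ x in {x | η x < δ}, (1 - η x) ∂μ))
    (k₀ k₁ ν₀ : ℝ) (hk₀ : 0 < k₀) (hk : k₀ ≤ k₁)
    (hdens : ∀ ν : ℝ, 0 < ν → ν ≤ ν₀ →
      k₀ * ν ≤ (μ {x | 0 ≤ δbar - η x ∧ δbar - η x ≤ ν}).toReal ∧
      (μ {x | 0 ≤ δbar - η x ∧ δbar - η x ≤ ν}).toReal ≤ k₁ * ν) :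
    ∀ δ' : ℝ, δ' ∈ Icc (0:ℝ) δbar → δbar - δ' ≤ ν₀ →
      (k₀ ^ 2 / (4 * k₁)) * (δbar - δ') ^ 2 ≤ Φ δbar - Φ δ' ∧
      (∀ εΩ : ℝ, 0 < εΩ → |Φ δbar - Φ δ'| < εΩ →
        |δbar - δ'| < (2 / k₀) * Real.sqrt (k₁ * εΩ)) := by
  intro δ' hδ' hΔν
  obtain rfl : Φ = linearMetricValue μ η m₁₁ m₀₀ := funext hΦ
  have hsum : 1 ≤ m₁₁ + m₀₀ := by nlinarith
  have hk₁ : 0 < k₁ := hk₀.trans_le hk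
  have hηi : Integrable η μ := Integrable.of_bound hη.aestronglyMeasurable 1
    (ae_of_all _ fun x => abs_le.mpr ⟨by linarith [(hη01 x).1], (hη01 x).2⟩)
  have hΔ : 0 ≤ δbar - δ' := sub_nonneg.mpr hδ'.2
  have hgrowth : k₀ ^ 2 / (4 * k₁) * (δbar - δ') ^ 2 ≤
      linearMetricValue μ η m₁₁ m₀₀ δbar - linearMetricValue μ η m₁₁ m₀₀ δ' := by
    rcases hΔ.eq_or_lt with hΔ0 | hΔpos
    · obtain rfl : δ' = δbar := by linarith
      simp
    have hbayes : m₀₀ = (m₁₁ + m₀₀) * δbar := by rw [hδbar]; field_simp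
    rw [linearMetricValue_sub_eq_mul_setIntegral hη hηi hbayes hδ'.2]
    have hquad := sq_mul_le_setIntegral_of_density (hη.const_sub δbar)
      ((integrable_const δbar).sub hηi) hk₀ (by linarith) hΔpos (hdens _ hΔpos hΔν).1
      fun t ht htΔ => (hdens t ht (htΔ.trans hΔν)).2
    have hbound_nonneg : 0 ≤ k₀ ^ 2 / (4 * k₁) * (δbar - δ') ^ 2 := by positivity
    exact hquad.trans (le_mul_of_one_le_left (hbound_nonneg.trans hquad) hsum)
  refine ⟨hgrowth, fun εΩ _ hlt => ?_⟩
  rw [abs_of_nonneg hΔ]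
  exact lt_two_div_mul_sqrt_of_sq_mul_lt hk₀ hk₁ hΔ
    (hgrowth.trans_lt ((le_abs_self _).trans_lt hlt))

/-- Under the two-sided density condition (Assumption 4) near the
Bayes-optimal threshold `δ̄ = m₀₀/(m₁₁+m₀₀)`, the linear-metric value `Φ` of
threshold classifiers satisfies the quadratic growth bound
`Φ(δ̄) − Φ(δ′) ≥ (k₀²/(4k₁))·(δ̄ − δ′)²` for `δ′ ≤ δ̄` close to `δ̄`;
in particular `|Φ(δ̄) − Φ(δ′)| < ε_Ω` forces `|δ̄ − δ′| < (2/k₀)·√(k₁ε_Ω)`. -/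
theorem linear_metric_quadratic_growth_near_threshold
    {X : Type*} [MeasurableSpace X] (μ : Measure X) [IsProbabilityMeasure μ]
    (η : X → ℝ) (hη : Measurable η) (hη01 : ∀ x, η x ∈ Icc (0:ℝ) 1)
    (m₁₁ m₀₀ : ℝ) (hm₁₁ : 0 ≤ m₁₁) (hm₀₀ : 0 ≤ m₀₀) (hnorm : m₁₁ ^ 2 + m₀₀ ^ 2 = 1)
    (δbar : ℝ) (hδbar : δbar = m₀₀ / (m₁₁ + m₀₀))
    (Φ : ℝ → ℝ)
    (hΦ : ∀ δ : ℝ, Φ δ = m₁₁ * (∫ x in {x | δ ≤ η x}, η x ∂μ) +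
      m₀₀ * (∫ x in {x | η x < δ}, (1 - η x) ∂μ))
    (k₀ k₁ ν₀ : ℝ) (hk₀ : 0 < k₀) (hk : k₀ ≤ k₁) (hν₀ : 0 < ν₀)
    (hdens : ∀ ν : ℝ, 0 < ν → ν ≤ ν₀ →
      k₀ * ν ≤ (μ {x | 0 ≤ δbar - η x ∧ δbar - η x ≤ ν}).toReal ∧
      (μ {x | 0 ≤ δbar - η x ∧ δbar - η x ≤ ν}).toReal ≤ k₁ * ν) :
    ∀ δ' : ℝ, δ' ∈ Icc (0:ℝ) δbar → δbar - δ' ≤ ν₀ →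
      (k₀ ^ 2 / (4 * k₁)) * (δbar - δ') ^ 2 ≤ Φ δbar - Φ δ' ∧
      (∀ εΩ : ℝ, 0 < εΩ → |Φ δbar - Φ δ'| < εΩ →
        |δbar - δ'| < (2 / k₀) * Real.sqrt (k₁ * εΩ)) :=
  linear_metric_quadratic_growth_near_threshold_general μ η hη hη01 m₁₁ m₀₀ hm₁₁ hm₀₀ hnorm δbar
    hδbar Φ hΦ k₀ k₁ ν₀ hk₀ hk hdens
end

section
/- Let η, η̂ : X → [0,1] be measurable, let δ̄ ∈ [0,1], and let ε > 0 satisfy |η(x) − η̂(x)| ≤ ε for all x ∈ X. Suppose there exist k₁ > 0 and ν₀ ≥ ε such that for every ν ∈ (0, ν₀]: μ{x : 0 ≤ δ̄ − η(x) ≤ ν} ≤ k₁·ν and μ{x : 0 ≤ η(x) − δ̄ ≤ ν} ≤ k₁·ν. Then the threshold classifiers h := 𝟙[η ≥ δ̄] and ĥ := 𝟙[η̂ ≥ δ̄] have close confusion matrices: |TP(ĥ) − TP(h)| ≤ k₁·ε and |TN(ĥ) − TN(h)| ≤ k₁·ε, where TP and TN are computed with the true η. -/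
/-! The classifiers `𝟙[η ≥ δ̄]` and `𝟙[η̂ ≥ δ̄]` disagree only where `η` is within `ε` of `δ̄`:
where `ĥ = 1 > h` we have `δ̄ - ε ≤ η < δ̄`, and where `h = 1 > ĥ` we have `δ̄ ≤ η ≤ δ̄ + ε`.
TP and TN integrate the `[0,1]`-valued functions `η` and `1 - η` over `{h = 1}` and `{h = 0}`,
so switching from `h` to `ĥ` moves each by at most the measure of one of these strips, which
the density bound caps at `k₁ ε`. -/

open MeasureTheory Set

section ThresholdSets

variable {X : Type*} {η g : X → ℝ} {δ ε : ℝ}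

lemma setOf_le_sdiff_setOf_le_subset_left (hclose : ∀ x, |η x - g x| ≤ ε) :
    {x | δ ≤ g x} \ {x | δ ≤ η x} ⊆ {x | 0 ≤ δ - η x ∧ δ - η x ≤ ε} := by
  rintro x ⟨hg, hη⟩
  simp only [mem_ofPred_eq, not_le] at hg hη ⊢
  have := (abs_le.mp (hclose x)).1
  constructor <;> linarith

lemma setOf_le_sdiff_setOf_le_subset_right (hclose : ∀ x, |η x - g x| ≤ ε) :
    {x | δ ≤ η x} \ {x | δ ≤ g x} ⊆ {x | 0 ≤ η x - δ ∧ η x - δ ≤ ε} := by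
  rintro x ⟨hη, hg⟩
  simp only [mem_ofPred_eq, not_le] at hg hη ⊢
  have := (abs_le.mp (hclose x)).2
  constructor <;> linarith

end ThresholdSets

section SetIntegral

variable {X : Type*} [MeasurableSpace X] {μ : Measure X} {f : X → ℝ} {s S T : Set X}

lemma integral_mul_indicator_one (hs : MeasurableSet s) :
    ∫ x, f x * s.indicator (fun _ => (1 : ℝ)) x ∂μ = ∫ x in s, f x ∂μ := by
  simp_rw [← indicator_mul_right, mul_one]
  exact integral_indicator hs

lemma integral_mul_one_sub_indicator_one (hs : MeasurableSet s) :
    ∫ x, f x * (1 - s.indicator (fun _ => (1 : ℝ)) x) ∂μ = ∫ x in sᶜ, f x ∂μ := by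
  simp_rw [← integral_mul_indicator_one hs.compl, indicator_compl, Pi.sub_apply]

lemma setIntegral_sub_setIntegral_eq_sdiff (hf : Integrable f μ) (hS : MeasurableSet S)
    (hT : MeasurableSet T) :
    ∫ x in T, f x ∂μ - ∫ x in S, f x ∂μ = ∫ x in T \ S, f x ∂μ - ∫ x in S \ T, f x ∂μ := by
  rw [← integral_inter_add_sdiff (s := T) hS hf.integrableOn,
    ← integral_inter_add_sdiff (s := S) hT hf.integrableOn, inter_comm]
  ring

variable [IsFiniteMeasure μ]

lemma setIntegral_mem_Icc_measureReal (hf0 : ∀ x, 0 ≤ f x) (hf1 : ∀ x, f x ≤ 1)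
    (s : Set X) : ∫ x in s, f x ∂μ ∈ Icc 0 (μ.real s) := by
  refine ⟨integral_nonneg hf0, ?_⟩
  calc ∫ x in s, f x ∂μ ≤ ∫ _ in s, (1 : ℝ) ∂μ :=
        integral_mono_of_nonneg (ae_of_all _ hf0) (integrable_const 1) (ae_of_all _ hf1)
    _ = μ.real s := by rw [setIntegral_const, smul_eq_mul, mul_one]

lemma abs_setIntegral_sub_setIntegral_le (hf : AEStronglyMeasurable f μ)
    (hf0 : ∀ x, 0 ≤ f x) (hf1 : ∀ x, f x ≤ 1) (hS : MeasurableSet S) (hT : MeasurableSet T)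
    {c : ℝ} (hTS : μ.real (T \ S) ≤ c) (hST : μ.real (S \ T) ≤ c) :
    |∫ x in T, f x ∂μ - ∫ x in S, f x ∂μ| ≤ c := by
  have hfi : Integrable f μ :=
    Integrable.of_bound hf 1 <| ae_of_all _ fun x => by rw [Real.norm_of_nonneg (hf0 x)]; exact hf1 x
  rw [setIntegral_sub_setIntegral_eq_sdiff hfi hS hT]
  obtain ⟨h₁, h₂⟩ := setIntegral_mem_Icc_measureReal (μ := μ) hf0 hf1 (T \ S)
  obtain ⟨h₃, h₄⟩ := setIntegral_mem_Icc_measureReal (μ := μ) hf0 hf1 (S \ T)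
  rw [abs_sub_le_iff]
  constructor <;> linarith

end SetIntegral

theorem estimated_threshold_confusion_close_general
    {X : Type*} [MeasurableSpace X] (μ : Measure X) [IsProbabilityMeasure μ]
    (η ηhat : X → ℝ) (hη : Measurable η) (hηhat : Measurable ηhat)
    (hη01 : ∀ x, η x ∈ Icc (0:ℝ) 1)
    (δbar : ℝ)
    (ε : ℝ) (hε : 0 < ε) (hclose : ∀ x, |η x - ηhat x| ≤ ε)
    (k₁ ν₀ : ℝ) (hν₀ : ε ≤ ν₀)
    (hdens_left : ∀ ν : ℝ, 0 < ν → ν ≤ ν₀ →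
      (μ {x | 0 ≤ δbar - η x ∧ δbar - η x ≤ ν}).toReal ≤ k₁ * ν)
    (hdens_right : ∀ ν : ℝ, 0 < ν → ν ≤ ν₀ →
      (μ {x | 0 ≤ η x - δbar ∧ η x - δbar ≤ ν}).toReal ≤ k₁ * ν)
    (h hhat : X → ℝ)
    (hdef : h = {x | δbar ≤ η x}.indicator (fun _ => (1:ℝ)))
    (hhatdef : hhat = {x | δbar ≤ ηhat x}.indicator (fun _ => (1:ℝ))) :
    |(∫ x, η x * hhat x ∂μ) - (∫ x, η x * h x ∂μ)| ≤ k₁ * ε ∧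
    |(∫ x, (1 - η x) * (1 - hhat x) ∂μ) - (∫ x, (1 - η x) * (1 - h x) ∂μ)| ≤ k₁ * ε := by
  subst hdef hhatdef
  have hS : MeasurableSet {x | δbar ≤ η x} := measurableSet_le measurable_const hη
  have hŜ : MeasurableSet {x | δbar ≤ ηhat x} := measurableSet_le measurable_const hηhat
  have hŜS : μ.real ({x | δbar ≤ ηhat x} \ {x | δbar ≤ η x}) ≤ k₁ * ε :=
    (measureReal_mono (setOf_le_sdiff_setOf_le_subset_left hclose)).trans (hdens_left ε hε hν₀)
  have hSŜ : μ.real ({x | δbar ≤ η x} \ {x | δbar ≤ ηhat x}) ≤ k₁ * ε :=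
    (measureReal_mono (setOf_le_sdiff_setOf_le_subset_right hclose)).trans (hdens_right ε hε hν₀)
  constructor
  · rw [integral_mul_indicator_one hŜ, integral_mul_indicator_one hS]
    exact abs_setIntegral_sub_setIntegral_le hη.aestronglyMeasurable (fun x => (hη01 x).1)
      (fun x => (hη01 x).2) hS hŜ hŜS hSŜ
  · rw [integral_mul_one_sub_indicator_one hŜ, integral_mul_one_sub_indicator_one hS]
    refine abs_setIntegral_sub_setIntegral_le (measurable_const.sub hη).aestronglyMeasurable
      (fun x => sub_nonneg.mpr (hη01 x).2) (fun x => sub_le_self 1 (hη01 x).1)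
      hS.compl hŜ.compl ?_ ?_ <;> rwa [compl_sdiff_compl]

/-- If `η̂` is uniformly within `ε` of `η` and `η` has upper-bounded
density near the threshold `δ̄` (both sides), then the threshold classifiers
`h = 𝟙[η ≥ δ̄]` and `ĥ = 𝟙[η̂ ≥ δ̄]` have confusion matrices (computed with the true
`η`) within `k₁·ε` of each other in each coordinate. -/
theorem estimated_threshold_confusion_close
    {X : Type*} [MeasurableSpace X] (μ : Measure X) [IsProbabilityMeasure μ]
    (η ηhat : X → ℝ) (hη : Measurable η) (hηhat : Measurable ηhat)
    (hη01 : ∀ x, η x ∈ Icc (0:ℝ) 1) (hηhat01 : ∀ x, ηhat x ∈ Icc (0:ℝ) 1)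
    (δbar : ℝ) (hδbar : δbar ∈ Icc (0:ℝ) 1)
    (ε : ℝ) (hε : 0 < ε) (hclose : ∀ x, |η x - ηhat x| ≤ ε)
    (k₁ ν₀ : ℝ) (hk₁ : 0 < k₁) (hν₀ : ε ≤ ν₀)
    (hdens_left : ∀ ν : ℝ, 0 < ν → ν ≤ ν₀ →
      (μ {x | 0 ≤ δbar - η x ∧ δbar - η x ≤ ν}).toReal ≤ k₁ * ν)
    (hdens_right : ∀ ν : ℝ, 0 < ν → ν ≤ ν₀ →
      (μ {x | 0 ≤ η x - δbar ∧ η x - δbar ≤ ν}).toReal ≤ k₁ * ν)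
    (h hhat : X → ℝ)
    (hdef : h = {x | δbar ≤ η x}.indicator (fun _ => (1:ℝ)))
    (hhatdef : hhat = {x | δbar ≤ ηhat x}.indicator (fun _ => (1:ℝ))) :
    |(∫ x, η x * hhat x ∂μ) - (∫ x, η x * h x ∂μ)| ≤ k₁ * ε ∧
    |(∫ x, (1 - η x) * (1 - hhat x) ∂μ) - (∫ x, (1 - η x) * (1 - h x) ∂μ)| ≤ k₁ * ε :=
  estimated_threshold_confusion_close_general μ η ηhat hη hηhat hη01 δbar ε hε hclose k₁ ν₀ hν₀
    hdens_left hdens_right h hhat hdef hhatdef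
end
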